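/- arXiv:2407.03643 — 2 statements merged into one kernel-verified Lean document; each statement's English description precedes it below -/
import Mathlib

section
/- (Lemma in Section 3.2) For every N ≥ 1, the matrix L_N is symmetric positive definite; in particular det L_N > 0 for every N ≥ 1. -/
noncomputable section

open Real Filter MeasureTheory Metric

namespace SD

/-- `c_m = (tanh((m + n/2)(ξ₁ − ξ₂)))^(−1/2)` -/
def cseq (n : ℕ) (ξ₁ ξ₂ : ℝ) (m : ℕ) : ℝ :=
  (Real.tanh (((m : ℝ) + (n : ℝ) / 2) * (ξ₁ - ξ₂))) ^ (-(1 : ℝ) / 2)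

/-- `d_m = (n + 2m)·c_m²·cosh ξ₂ − n·sinh ξ₂` -/
def dseq (n : ℕ) (ξ₁ ξ₂ : ℝ) (m : ℕ) : ℝ :=
  ((n : ℝ) + 2 * (m : ℝ)) * (cseq n ξ₁ ξ₂ m) ^ 2 * Real.cosh ξ₂ - (n : ℝ) * Real.sinh ξ₂

/-- `w_m = √((m + n − 1)·m)` -/
def wseq (n : ℕ) (m : ℕ) : ℝ := Real.sqrt (((m : ℝ) + (n : ℝ) - 1) * (m : ℝ))

/-- The `N×N` finite-section matrix `L_N`. -/
def secMat (n : ℕ) (ξ₁ ξ₂ α : ℝ) (N : ℕ) : Matrix (Fin N) (Fin N) ℝ :=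
  Matrix.of fun i j =>
    if (i : ℕ) = (j : ℕ) then dseq n ξ₁ ξ₂ i / (2 * α)
    else if (i : ℕ) + 1 = (j : ℕ) ∨ (j : ℕ) + 1 = (i : ℕ) then
      -(wseq n (max (i : ℕ) (j : ℕ)) * cseq n ξ₁ ξ₂ (min (i : ℕ) (j : ℕ)) *
          cseq n ξ₁ ξ₂ (max (i : ℕ) (j : ℕ))) / (2 * α)
    else 0

/-- `σ_{1,N}`, the smallest eigenvalue of `L_N`. -/
def sigma1 (n : ℕ) (ξ₁ ξ₂ α : ℝ) (N : ℕ) : ℝ :=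
  sInf {σ : ℝ | ∃ v : Fin N → ℝ, v ≠ 0 ∧ (secMat n ξ₁ ξ₂ α N).mulVec v = σ • v}

/-- The ambient Euclidean space `ℝ^{n+2}`. -/
abbrev Pt (n : ℕ) := EuclideanSpace ℝ (Fin (n + 2))

/-- The first standard basis vector `e₁`. -/
def e1 (n : ℕ) : Pt n := EuclideanSpace.single 0 1

/-- Center `α·coth(ξ)·e₁` of the boundary sphere `{ξ(x) = ξ}`. -/
def ctr (n : ℕ) (α ξ : ℝ) : Pt n := (α * Real.cosh ξ / Real.sinh ξ) • e1 n

/-- Radius `α / sinh ξ`. -/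
def rad (α ξ : ℝ) : ℝ := α / Real.sinh ξ

/-- The open ball with center `α·coth(ξ)·e₁` and radius `α/sinh ξ`. -/
def ballB (n : ℕ) (α ξ : ℝ) : Set (Pt n) := Metric.ball (ctr n α ξ) (rad α ξ)

/-- The eccentric spherical shell `Ω = B₂ \ closure B₁`. -/
def shell (n : ℕ) (ξ₁ ξ₂ α : ℝ) : Set (Pt n) := ballB n α ξ₂ \ closure (ballB n α ξ₁)

/-- `Γ_D = ∂B₁`. -/
def gammaD (n : ℕ) (α ξ₁ : ℝ) : Set (Pt n) := frontier (ballB n α ξ₁)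

/-- `Γ_S = ∂B₂`. -/
def gammaS (n : ℕ) (α ξ₂ : ℝ) : Set (Pt n) := frontier (ballB n α ξ₂)

/-- The `(n+1)`-dimensional Hausdorff measure `μ`. -/
def surfMeas (n : ℕ) : Measure (Pt n) := μH[(n : ℝ) + 1]

/-- Dirichlet energy `∫_Ω ‖∇v‖²`. -/
def energy (n : ℕ) (ξ₁ ξ₂ α : ℝ) (v : Pt n → ℝ) : ℝ :=
  ∫ x in shell n ξ₁ ξ₂ α, ‖gradient v x‖ ^ 2

/-- `∫_{Γ_S} v² dμ`. -/
def bdryNormSq (n : ℕ) (ξ₂ α : ℝ) (v : Pt n → ℝ) : ℝ :=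
  ∫ x in gammaS n α ξ₂, (v x) ^ 2 ∂(surfMeas n)

/-- `v` is of class `C^k` on a neighborhood of the closure of `Ω`. -/
def SmoothNhd (n : ℕ) (ξ₁ ξ₂ α : ℝ) (k : ℕ∞) (v : Pt n → ℝ) : Prop :=
  ∃ U : Set (Pt n), IsOpen U ∧ closure (shell n ξ₁ ξ₂ α) ⊆ U ∧ ContDiffOn ℝ k v U

/-- Admissible trial function for the first Steklov–Dirichlet eigenvalue. -/
def Admissible (n : ℕ) (ξ₁ ξ₂ α : ℝ) (v : Pt n → ℝ) : Prop :=
  SmoothNhd n ξ₁ ξ₂ α 1 v ∧ (∀ x ∈ gammaD n α ξ₁, v x = 0) ∧ 0 < bdryNormSq n ξ₂ α v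

/-- Rayleigh quotient `R(v)`. -/
def rayleigh (n : ℕ) (ξ₁ ξ₂ α : ℝ) (v : Pt n → ℝ) : ℝ :=
  energy n ξ₁ ξ₂ α v / bdryNormSq n ξ₂ α v

/-- The first Steklov–Dirichlet eigenvalue `σ₁` of `Ω`. -/
def steklov1 (n : ℕ) (ξ₁ ξ₂ α : ℝ) : ℝ :=
  sInf {r : ℝ | ∃ v : Pt n → ℝ, Admissible n ξ₁ ξ₂ α v ∧ r = rayleigh n ξ₁ ξ₂ α v}

/-- Auxiliary pair `(G_m^{(n/2)}, G_{m+1}^{(n/2)})` for the Gegenbauer recursion. -/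
def gegenAux (n : ℕ) : ℕ → ℝ → ℝ × ℝ
  | 0, s => (1, (n : ℝ) * s)
  | m + 1, s =>
      ((gegenAux n m s).2,
        ((2 * ((m : ℝ) + 2) + (n : ℝ) - 2) * s * (gegenAux n m s).2
          - (((m : ℝ) + 2) + (n : ℝ) - 2) * (gegenAux n m s).1) / ((m : ℝ) + 2))

/-- The Gegenbauer polynomial `G_m^{(n/2)}`. -/
def gegen (n m : ℕ) (s : ℝ) : ℝ := (gegenAux n m s).1

/-- `r₊(x) = ‖x − α·e₁‖`. -/
def rP (n : ℕ) (α : ℝ) (x : Pt n) : ℝ := ‖x - α • e1 n‖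

/-- `r₋(x) = ‖x + α·e₁‖`. -/
def rM (n : ℕ) (α : ℝ) (x : Pt n) : ℝ := ‖x + α • e1 n‖

/-- Bispherical coordinate `ξ(x) = ln(r₋/r₊)`. -/
def xiC (n : ℕ) (α : ℝ) (x : Pt n) : ℝ := Real.log (rM n α x / rP n α x)

/-- Bispherical coordinate `cos θ(x)`. -/
def cosT (n : ℕ) (α : ℝ) (x : Pt n) : ℝ :=
  (rP n α x ^ 2 + rM n α x ^ 2 - 4 * α ^ 2) / (2 * rP n α x * rM n α x)

/-- The basis harmonic function `u_k`. -/
def uBase (n : ℕ) (ξ₁ α : ℝ) (k : ℕ) (x : Pt n) : ℝ :=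
  (Real.cosh (xiC n α x) - cosT n α x) ^ ((n : ℝ) / 2) *
    (Real.exp (((k : ℝ) + (n : ℝ) / 2) * (2 * ξ₁ - xiC n α x))
      - Real.exp (((k : ℝ) + (n : ℝ) / 2) * xiC n α x)) *
    gegen n k (cosT n α x)

/-- Boundary mode `g̃_k` on `Γ_S`. -/
def gtilde (n : ℕ) (ξ₂ α : ℝ) (k : ℕ) (x : Pt n) : ℝ :=
  (Real.cosh ξ₂ - cosT n α x) ^ ((n : ℝ) / 2) * gegen n k (cosT n α x)

/-- Outward unit normal of `B₂` at `x ∈ Γ_S`. -/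
def nuS (n : ℕ) (ξ₂ α : ℝ) (x : Pt n) : Pt n := (rad α ξ₂)⁻¹ • (x - ctr n α ξ₂)

/-- Normal derivative `∂v/∂n(x)` on `Γ_S`. -/
def normalDeriv (n : ℕ) (ξ₂ α : ℝ) (v : Pt n → ℝ) (x : Pt n) : ℝ :=
  fderiv ℝ v x (nuS n ξ₂ α x)

/-- `E_k = e^{(k+n/2)(2ξ₁−ξ₂)} − e^{(k+n/2)ξ₂}`. -/
def modeCoeff (n : ℕ) (ξ₁ ξ₂ : ℝ) (k : ℕ) : ℝ :=
  Real.exp (((k : ℝ) + (n : ℝ) / 2) * (2 * ξ₁ - ξ₂))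
    - Real.exp (((k : ℝ) + (n : ℝ) / 2) * ξ₂)

/-- The truncated eigenfunction `u_{1,m}` built from the coefficients `C̃`. -/
def trunc (n : ℕ) (ξ₁ ξ₂ α : ℝ) (m : ℕ) (C : Fin m → ℝ) (x : Pt n) : ℝ :=
  ∑ k : Fin m, C k * (modeCoeff n ξ₁ ξ₂ (k : ℕ))⁻¹ * uBase n ξ₁ α (k : ℕ) x

/-- `C̃` is an eigenvector of `L_m` for the smallest eigenvalue `σ_{1,m}`. -/
def IsFirstEigvec (n : ℕ) (ξ₁ ξ₂ α : ℝ) (m : ℕ) (C : Fin m → ℝ) : Prop :=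
  C ≠ 0 ∧ (secMat n ξ₁ ξ₂ α m).mulVec C = sigma1 n ξ₁ ξ₂ α m • C

/-- Steklov defect `f_m = ∂u_{1,m}/∂n − σ_{1,m}·u_{1,m}` on `Γ_S`. -/
def defect (n : ℕ) (ξ₁ ξ₂ α : ℝ) (m : ℕ) (C : Fin m → ℝ) (x : Pt n) : ℝ :=
  normalDeriv n ξ₂ α (trunc n ξ₁ ξ₂ α m C) x - sigma1 n ξ₁ ξ₂ α m * trunc n ξ₁ ξ₂ α m C x

/-- Pointwise Laplacian `Δf(x) = Σ_i ∂²f/∂x_i²`. -/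
def lap (n : ℕ) (f : Pt n → ℝ) (x : Pt n) : ℝ :=
  ∑ i : Fin (n + 2),
    fderiv ℝ (fun y => fderiv ℝ f y (EuclideanSpace.single i 1)) x (EuclideanSpace.single i 1)

end SD

/-!
Up to the factor `1 / (2α)`, `L_N` is tridiagonal with diagonal `d_k` and off-diagonal
`-β_k`, `β_k = w_{k+1} c_k c_{k+1}`. Split `d_k = A_k + B_k + G_k` with
`A_k = c_k² (n + k) e^{-ξ₂}`, `B_k = c_k² k e^{ξ₂}`, `G_k = n sinh ξ₂ (c_k² - 1)`.
Then `β_k² = A_k B_{k+1}`, so `2 β_k |y_k y_{k+1}| ≤ A_k y_k² + B_{k+1} y_{k+1}²`;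
the `B`-terms telescope, and the quadratic form is at least `∑ G_k y_k²`, which is positive
because `c_k² = coth((k + n/2)(ξ₁ - ξ₂)) > 1`.
-/

open Matrix

lemma neg_le_two_mul_mul_of_sq_le {a b e u v : ℝ} (ha : 0 ≤ a) (hb : 0 ≤ b)
    (he : e ^ 2 ≤ a * b) : -(a * u ^ 2 + b * v ^ 2) ≤ 2 * e * u * v := by
  rcases ha.eq_or_lt with rfl | ha
  · have : e = 0 := by nlinarith
    subst this
    nlinarith
  · -- `a (a u² + b v² + 2 e u v) = (a u + e v)² + (a b - e²) v²`
    nlinarith [sq_nonneg (a * u + e * v), mul_nonneg (sub_nonneg.2 he) (sq_nonneg v)]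

lemma sum_range_mul_sq_le_tridiag_form {a b g d e y : ℕ → ℝ} {N : ℕ}
    (hd : ∀ k, d k = a k + b k + g k) (ha : ∀ k, 0 ≤ a k) (hb : ∀ k, 0 ≤ b k)
    (he : ∀ k, e k ^ 2 ≤ a k * b (k + 1)) (hy : y N = 0) :
    ∑ i ∈ Finset.range N, g i * y i ^ 2 ≤
      ∑ i ∈ Finset.range N, (d i * y i ^ 2 + 2 * e i * y i * y (i + 1)) := by
  have hterm : ∀ i, g i * y i ^ 2 + (b i * y i ^ 2 - b (i + 1) * y (i + 1) ^ 2) ≤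
      d i * y i ^ 2 + 2 * e i * y i * y (i + 1) := fun i => by
    have := neg_le_two_mul_mul_of_sq_le (u := y i) (v := y (i + 1)) (ha i) (hb (i + 1)) (he i)
    rw [hd]
    linarith
  calc ∑ i ∈ Finset.range N, g i * y i ^ 2
      ≤ ∑ i ∈ Finset.range N, g i * y i ^ 2 + b 0 * y 0 ^ 2 := by
        have := mul_nonneg (hb 0) (sq_nonneg (y 0))
        linarith
    _ = ∑ i ∈ Finset.range N,
          (g i * y i ^ 2 + (b i * y i ^ 2 - b (i + 1) * y (i + 1) ^ 2)) := by
        rw [Finset.sum_add_distrib, Finset.sum_range_sub' (fun i => b i * y i ^ 2), hy]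
        ring
    _ ≤ _ := Finset.sum_le_sum fun i _ => hterm i

def Matrix.tridiag (N : ℕ) (d e : ℕ → ℝ) : Matrix (Fin N) (Fin N) ℝ :=
  Matrix.of fun i j =>
    if (i : ℕ) = j then d i
    else if (i : ℕ) + 1 = j ∨ (j : ℕ) + 1 = i then e (min (i : ℕ) j)
    else 0

def Fin.extendByZero {N : ℕ} (x : Fin N → ℝ) (k : ℕ) : ℝ :=
  if h : k < N then x ⟨k, h⟩ else 0

@[simp]
lemma Fin.extendByZero_val {N : ℕ} (x : Fin N → ℝ) (k : Fin N) : Fin.extendByZero x k = x k :=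
  dif_pos k.isLt

lemma Fin.extendByZero_of_le {N k : ℕ} (x : Fin N → ℝ) (h : N ≤ k) :
    Fin.extendByZero x k = 0 :=
  dif_neg h.not_gt

namespace Matrix

variable {N : ℕ} {d e : ℕ → ℝ}

lemma tridiag_isHermitian : (tridiag N d e).IsHermitian := by
  ext i j
  simp only [conjTranspose_apply, tridiag, of_apply, star_trivial]
  grind

lemma dotProduct_tridiag_mulVec (x : Fin N → ℝ) :
    x ⬝ᵥ tridiag N d e *ᵥ x = ∑ i ∈ Finset.range N, (d i * Fin.extendByZero x i ^ 2 +
      2 * e i * Fin.extendByZero x i * Fin.extendByZero x (i + 1)) := by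
  set y := Fin.extendByZero x
  have hx (k : Fin N) : x k = y k := (Fin.extendByZero_val x k).symm
  have hentry (i j : ℕ) :
      (if i = j then d i else if i + 1 = j ∨ j + 1 = i then e (min i j) else 0) =
        (if i = j then d i else 0) + (if i + 1 = j then e i else 0) +
          (if j + 1 = i then e j else 0) := by
    grind
  have hnext (i : ℕ) :
      ∑ j ∈ Finset.range N, (if i + 1 = j then e i * y i * y j else 0) =
        e i * y i * y (i + 1) := by
    rw [Finset.sum_ite_eq]
    split_ifs with h
    · rfl
    · have hy : y (i + 1) = 0 := Fin.extendByZero_of_le x (by simpa using h)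
      rw [hy, mul_zero]
  calc x ⬝ᵥ tridiag N d e *ᵥ x
      = ∑ i ∈ Finset.range N, ∑ j ∈ Finset.range N, y i *
          ((if i = j then d i else if i + 1 = j ∨ j + 1 = i then e (min i j) else 0) * y j) := by
        simp only [dotProduct, mulVec, tridiag, of_apply, hx]
        rw [← Fin.sum_univ_eq_sum_range]
        refine Finset.sum_congr rfl fun i _ => ?_
        rw [Finset.mul_sum, ← Fin.sum_univ_eq_sum_range]
    _ = ∑ i ∈ Finset.range N, (d i * y i ^ 2 + ∑ j ∈ Finset.range N,
          ((if i + 1 = j then e i * y i * y j else 0) +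
            (if j + 1 = i then e j * y j * y i else 0))) := by
        refine Finset.sum_congr rfl fun i hi => ?_
        have hsplit (j : ℕ) : y i *
            ((if i = j then d i else if i + 1 = j ∨ j + 1 = i then e (min i j) else 0) * y j)
            = (if i = j then d i * y i ^ 2 else 0) + ((if i + 1 = j then e i * y i * y j else 0)
              + (if j + 1 = i then e j * y j * y i else 0)) := by
          rw [hentry]
          split_ifs <;> subst_vars <;> ring
        rw [Finset.sum_congr rfl fun j _ => hsplit j, Finset.sum_add_distrib, Finset.sum_ite_eq,
          if_pos hi]
    _ = _ := by
        simp only [Finset.sum_add_distrib]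
        rw [Finset.sum_comm (f := fun i j => if j + 1 = i then e j * y j * y i else 0)]
        simp only [hnext, ← Finset.sum_add_distrib]
        exact Finset.sum_congr rfl fun i _ => by ring

lemma posDef_tridiag {a b g : ℕ → ℝ}
    (hd : ∀ k, d k = a k + b k + g k) (ha : ∀ k, 0 ≤ a k) (hb : ∀ k, 0 ≤ b k)
    (hg : ∀ k, 0 < g k) (he : ∀ k, e k ^ 2 ≤ a k * b (k + 1)) : (tridiag N d e).PosDef := by
  refine posDef_iff_dotProduct_mulVec.2 ⟨tridiag_isHermitian, fun x hx => ?_⟩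
  obtain ⟨i, hi⟩ := Function.ne_iff.1 hx
  have hpos : 0 < ∑ k ∈ Finset.range N, g k * Fin.extendByZero x k ^ 2 :=
    Finset.sum_pos' (fun k _ => mul_nonneg (hg k).le (sq_nonneg _))
      ⟨i, Finset.mem_range.2 i.isLt, mul_pos (hg i) (by simpa [sq_pos_iff] using hi)⟩
  rw [show star x = x from star_trivial x, dotProduct_tridiag_mulVec]
  exact hpos.trans_le
    (sum_range_mul_sq_le_tridiag_form hd ha hb he (Fin.extendByZero_of_le x le_rfl))

end Matrix

lemma Real.tanh_pos_of_pos {x : ℝ} (hx : 0 < x) : 0 < tanh x := by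
  rw [tanh_eq_sinh_div_cosh]
  exact div_pos (sinh_pos_iff.2 hx) (cosh_pos x)

namespace SD

variable {n : ℕ} {ξ₁ ξ₂ : ℝ}

lemma tanh_cseq_arg_pos (hn : 1 ≤ n) (hξ : ξ₂ < ξ₁) (k : ℕ) :
    0 < tanh (((k : ℝ) + (n : ℝ) / 2) * (ξ₁ - ξ₂)) := by
  have : (0 : ℝ) < n := Nat.cast_pos.2 hn
  exact tanh_pos_of_pos (mul_pos (by positivity) (sub_pos.2 hξ))

lemma cseq_sq (hn : 1 ≤ n) (hξ : ξ₂ < ξ₁) (k : ℕ) :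
    cseq n ξ₁ ξ₂ k ^ 2 = (tanh (((k : ℝ) + (n : ℝ) / 2) * (ξ₁ - ξ₂)))⁻¹ := by
  rw [cseq, ← rpow_natCast, ← rpow_mul (tanh_cseq_arg_pos hn hξ k).le]
  norm_num [rpow_neg_one]

lemma one_lt_cseq_sq (hn : 1 ≤ n) (hξ : ξ₂ < ξ₁) (k : ℕ) :
    1 < cseq n ξ₁ ξ₂ k ^ 2 := by
  rw [cseq_sq hn hξ k]
  exact one_lt_inv₀ (tanh_cseq_arg_pos hn hξ k) |>.2 (tanh_lt_one _)

lemma dseq_eq (k : ℕ) : dseq n ξ₁ ξ₂ k =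
    cseq n ξ₁ ξ₂ k ^ 2 * (n + k) * exp (-ξ₂) + cseq n ξ₁ ξ₂ k ^ 2 * k * exp ξ₂
      + n * sinh ξ₂ * (cseq n ξ₁ ξ₂ k ^ 2 - 1) := by
  rw [dseq, cosh_eq, sinh_eq]
  ring

lemma wseq_succ_sq (k : ℕ) : wseq n (k + 1) ^ 2 = (n + k) * (k + 1) := by
  rw [wseq, Nat.cast_succ, show (k : ℝ) + 1 + n - 1 = n + k by ring, sq_sqrt (by positivity)]

lemma wseq_mul_cseq_sq (k : ℕ) :
    (wseq n (k + 1) * cseq n ξ₁ ξ₂ k * cseq n ξ₁ ξ₂ (k + 1)) ^ 2 =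
      (cseq n ξ₁ ξ₂ k ^ 2 * (n + k) * exp (-ξ₂)) *
        (cseq n ξ₁ ξ₂ (k + 1) ^ 2 * ↑(k + 1) * exp ξ₂) := by
  rw [mul_pow, mul_pow, wseq_succ_sq, exp_neg]
  field_simp
  push_cast
  ring

lemma secMat_eq_smul_tridiag (α : ℝ) (N : ℕ) :
    secMat n ξ₁ ξ₂ α N = (2 * α)⁻¹ • tridiag N (dseq n ξ₁ ξ₂)
      fun k => -(wseq n (k + 1) * cseq n ξ₁ ξ₂ k * cseq n ξ₁ ξ₂ (k + 1)) := by
  ext i j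
  simp only [secMat, tridiag, of_apply, Matrix.smul_apply, smul_eq_mul]
  split_ifs with hij hadj
  · rw [hij, div_eq_inv_mul]
  · rw [show max (i : ℕ) j = min (i : ℕ) j + 1 by omega, div_eq_inv_mul]
  · rw [mul_zero]

end SD

open SD in
/-- Section 3.2 Lemma: `L_N` is symmetric positive definite; in particular `det L_N > 0`. -/
theorem secMat_posDef
    (n : ℕ) (hn : 1 ≤ n) (ξ₁ ξ₂ α : ℝ) (hξ : ξ₂ < ξ₁) (hξ₂ : 0 < ξ₂) (hα : 0 < α) :
    ∀ N : ℕ, 1 ≤ N →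
      (secMat n ξ₁ ξ₂ α N).PosDef ∧ 0 < (secMat n ξ₁ ξ₂ α N).det := by
  intro N _
  have hpd : (secMat n ξ₁ ξ₂ α N).PosDef := by
    rw [secMat_eq_smul_tridiag]
    refine .smul (posDef_tridiag (dseq_eq ·) (fun k => by positivity) (fun k => by positivity)
      (fun k => ?_) (fun k => ?_)) (by positivity)
    · exact mul_pos (mul_pos (Nat.cast_pos.2 hn) (sinh_pos_iff.2 hξ₂))
        (sub_pos.2 (one_lt_cseq_sq hn hξ k))
    · rw [neg_sq, wseq_mul_cseq_sq]
  exact ⟨hpd, hpd.det_pos⟩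
end
end

section
/- (Harmonicity and inner Dirichlet condition of the basis functions) For every integer k ≥ 0, the function u_k is harmonic in Ω and vanishes identically on Γ_D = ∂B₁. -/
noncomputable section

open Real Filter MeasureTheory Metric

/-! The functions `x ↦ ‖(1 - t) x - α (1 + t) e₁‖⁻ⁿ` are, for `t ≠ 1`, multiples of Newtonian
potentials of `ℝⁿ⁺²` with a pole on the `e₁`-axis, so their Taylor coefficients in `t` at `t = 0`
are harmonic away from `α e₁`: `∂ₜ` commutes with the Laplacian in `x`. Since
`‖(1 - t) x - α (1 + t) e₁‖² = r₊² (1 - 2 cos θ (r₋/r₊) t + (r₋/r₊)² t²)`, the generating function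
`(1 - 2 s u + u²)^(-n/2) = ∑ G_k(s) uᵏ` of the Gegenbauer polynomials identifies the `k`-th
coefficient with `k! r₊⁻ⁿ (r₋/r₊)ᵏ G_k(cos θ)`, and `α ↦ -α` swaps `r₊` and `r₋`. As
`cosh ξ - cos θ = 2α²/(r₊ r₋)` and `e^ξ = r₋/r₊`, `u_k` is a combination of these two coefficients,
hence harmonic off the foci `± α e₁`, which lie outside `Ω`. On `Γ_D` we have `ξ = ξ₁`, where the
two exponentials in `u_k` cancel. -/

open Filter Topology InnerProductSpace Laplacian
open scoped ContDiff Nat RealInnerProductSpace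

section DirDeriv

variable {X F : Type*} [NormedAddCommGroup X] [NormedSpace ℝ X]
  [NormedAddCommGroup F] [NormedSpace ℝ F]

/-- Defined through `fderiv` rather than `lineDeriv`, so that iterated directional derivatives
are values of iterated `fderiv`s. -/
def dirDeriv (v : X) (f : X → F) : X → F := fun p => fderiv ℝ f p v

lemma ContDiffOn.dirDeriv {f : X → F} {U : Set X} (hf : ContDiffOn ℝ ∞ f U) (hU : IsOpen U)
    (v : X) : ContDiffOn ℝ ∞ (dirDeriv v f) U :=
  (hf.fderiv_of_isOpen hU le_rfl).clm_apply contDiffOn_const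

lemma dirDeriv_dirDeriv {f : X → F} {p : X} (hf : DifferentiableAt ℝ (fderiv ℝ f) p) (v w : X) :
    dirDeriv v (dirDeriv w f) p = fderiv ℝ (fderiv ℝ f) p v w := by
  show fderiv ℝ (fun y => fderiv ℝ f y w) p v = _
  simp [fderiv_clm_apply hf (differentiableAt_const w)]

lemma dirDeriv_comm {f : X → F} {p : X} (hf : ContDiffAt ℝ 2 f p) (v w : X) :
    dirDeriv v (dirDeriv w f) p = dirDeriv w (dirDeriv v f) p := by
  have hf' : DifferentiableAt ℝ (fderiv ℝ f) p :=
    (hf.fderiv_right (m := 1) le_rfl).differentiableAt one_ne_zero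
  rw [dirDeriv_dirDeriv hf', dirDeriv_dirDeriv hf', hf.isSymmSndFDerivAt (by simp)]

/-- Third derivatives are symmetric, so `∑ᵢ ∂ᵥᵢ∂ᵥᵢ` commutes with `∂ₐ`. -/
lemma sum_dirDeriv_dirDeriv_dirDeriv_eq_zero {ι : Type*} [Fintype ι] {f : X → F} {U : Set X}
    (hU : IsOpen U) (hf : ContDiffOn ℝ ∞ f U) (v : ι → X)
    (h : ∀ q ∈ U, ∑ i, dirDeriv (v i) (dirDeriv (v i) f) q = 0) (a : X) {p : X} (hp : p ∈ U) :
    ∑ i, dirDeriv (v i) (dirDeriv (v i) (dirDeriv a f)) p = 0 := by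
  have hC2 : ∀ g : X → F, ContDiffOn ℝ ∞ g U → ∀ q ∈ U, ContDiffAt ℝ 2 g q := fun g hg q hq =>
    (hg.contDiffAt (hU.mem_nhds hq)).of_le (by norm_cast)
  have hswap : ∀ i, dirDeriv (v i) (dirDeriv (v i) (dirDeriv a f)) p
      = dirDeriv a (dirDeriv (v i) (dirDeriv (v i) f)) p := by
    intro i
    have hev : dirDeriv (v i) (dirDeriv a f) =ᶠ[𝓝 p] dirDeriv a (dirDeriv (v i) f) := by
      filter_upwards [hU.mem_nhds hp] with q hq using dirDeriv_comm (hC2 f hf q hq) _ _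
    calc dirDeriv (v i) (dirDeriv (v i) (dirDeriv a f)) p
        = dirDeriv (v i) (dirDeriv a (dirDeriv (v i) f)) p := by
          simp only [dirDeriv, hev.fderiv_eq]
      _ = dirDeriv a (dirDeriv (v i) (dirDeriv (v i) f)) p :=
          dirDeriv_comm (hC2 _ (hf.dirDeriv hU _) p hp) _ _
  have hdiff : ∀ i ∈ Finset.univ, DifferentiableAt ℝ (dirDeriv (v i) (dirDeriv (v i) f)) p :=
    fun i _ => (hC2 _ ((hf.dirDeriv hU _).dirDeriv hU _) p hp).differentiableAt two_ne_zero
  have hzero : (fun q => ∑ i, dirDeriv (v i) (dirDeriv (v i) f) q) =ᶠ[𝓝 p] fun _ => 0 :=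
    eventually_of_mem (hU.mem_nhds hp) h
  simp only [hswap]
  have := congrArg (fun L : X →L[ℝ] F => L a) hzero.fderiv_eq
  rw [fderiv_fun_sum hdiff] at this
  simpa [dirDeriv] using this

end DirDeriv

lemma isOpen_slice {A B : Type*} [TopologicalSpace A] [TopologicalSpace B] {U : Set (A × B)}
    (hU : IsOpen U) (a : A) : IsOpen {b : B | (a, b) ∈ U} :=
  hU.preimage (continuous_const.prodMk continuous_id)

section Slices

variable {E F : Type*} [NormedAddCommGroup E] [NormedSpace ℝ E]
  [NormedAddCommGroup F] [NormedSpace ℝ F]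

lemma dirDeriv_slice {G : ℝ × E → F} {t : ℝ} {y : E} (hG : DifferentiableAt ℝ G (t, y))
    (v : E) : dirDeriv v (fun z => G (t, z)) y = dirDeriv (0, v) G (t, y) := by
  have h := (hG.hasFDerivAt.comp y (hasFDerivAt_prodMk_right (𝕜 := ℝ) t y)).fderiv
  simp only [Function.comp_def] at h
  simp [dirDeriv, h]

lemma deriv_slice {G : ℝ × E → F} {t : ℝ} {y : E} (hG : DifferentiableAt ℝ G (t, y)) :
    deriv (fun s => G (s, y)) t = dirDeriv (1, 0) G (t, y) := by
  have h := (hG.hasFDerivAt.comp t (hasFDerivAt_prodMk_left (𝕜 := ℝ) t y)).fderiv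
  simp only [Function.comp_def] at h
  rw [← fderiv_apply_one_eq_deriv, h]
  simp [dirDeriv]

variable {G : ℝ × E → F} {U : Set (ℝ × E)}

lemma ContDiffOn.contDiffAt_slice (hU : IsOpen U) (hG : ContDiffOn ℝ ∞ G U) {p : ℝ × E}
    (hp : p ∈ U) : ContDiffAt ℝ ∞ (fun y => G (p.1, y)) p.2 :=
  (hG.contDiffAt (hU.mem_nhds hp)).comp p.2 (contDiffAt_const.prodMk contDiffAt_id)

end Slices

section Laplacian

variable {E F : Type*} [NormedAddCommGroup E] [InnerProductSpace ℝ E] [FiniteDimensional ℝ E]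
  [NormedAddCommGroup F] [NormedSpace ℝ F]

lemma laplacian_eq_sum_dirDeriv {ι : Type*} [Fintype ι] (b : OrthonormalBasis ι ℝ E)
    {f : E → F} {x : E} (hf : ContDiffAt ℝ 2 f x) :
    Δ f x = ∑ i, dirDeriv (b i) (dirDeriv (b i) f) x := by
  have hf' : DifferentiableAt ℝ (fderiv ℝ f) x :=
    (hf.fderiv_right (m := 1) le_rfl).differentiableAt one_ne_zero
  simp [laplacian_eq_iteratedFDeriv_orthonormalBasis f b, iteratedFDeriv_two_apply,
    dirDeriv_dirDeriv hf']

variable {G : ℝ × E → F} {U : Set (ℝ × E)}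

lemma laplacian_slice {ι : Type*} [Fintype ι] (b : OrthonormalBasis ι ℝ E) (hU : IsOpen U)
    (hG : ContDiffOn ℝ ∞ G U) {p : ℝ × E} (hp : p ∈ U) :
    Δ (fun y => G (p.1, y)) p.2 = ∑ i, dirDeriv (0, b i) (dirDeriv (0, b i) G) p := by
  have hdiff : ∀ g : ℝ × E → F, ContDiffOn ℝ ∞ g U → ∀ q ∈ U, DifferentiableAt ℝ g q :=
    fun g hg q hq => (hg.contDiffAt (hU.mem_nhds hq)).differentiableAt (by simp)
  rw [laplacian_eq_sum_dirDeriv b ((hG.contDiffAt_slice hU hp).of_le (by norm_cast))]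
  refine Finset.sum_congr rfl fun i _ => ?_
  have hev : dirDeriv (b i) (fun y => G (p.1, y)) =ᶠ[𝓝 p.2]
      fun y => dirDeriv (0, b i) G (p.1, y) := by
    filter_upwards [(isOpen_slice hU p.1).mem_nhds hp] with y hy
    exact dirDeriv_slice (hdiff G hG _ hy) _
  simp only [dirDeriv] at hev ⊢
  rw [hev.fderiv_eq]
  exact dirDeriv_slice (hdiff _ (hG.dirDeriv hU _) p hp) _

lemma harmonicAt_slice_dirDeriv (hU : IsOpen U) (hG : ContDiffOn ℝ ∞ G U)
    (hharm : ∀ p ∈ U, HarmonicAt (fun y => G (p.1, y)) p.2) (a : ℝ × E) {p : ℝ × E}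
    (hp : p ∈ U) : HarmonicAt (fun y => dirDeriv a G (p.1, y)) p.2 := by
  let b := stdOrthonormalBasis ℝ E
  have hGa := hG.dirDeriv hU a
  refine ⟨(hGa.contDiffAt_slice hU hp).of_le (by norm_cast), ?_⟩
  filter_upwards [(isOpen_slice hU p.1).mem_nhds hp] with y hy
  rw [laplacian_slice b hU hGa hy]
  refine sum_dirDeriv_dirDeriv_dirDeriv_eq_zero hU hG _ (fun q hq => ?_) a hy
  rw [← laplacian_slice b hU hG hq]
  exact (hharm q hq).2.eq_of_nhds

theorem harmonicAt_iteratedDeriv_slice (hU : IsOpen U) (hG : ContDiffOn ℝ ∞ G U)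
    (hharm : ∀ p ∈ U, HarmonicAt (fun y => G (p.1, y)) p.2) (k : ℕ) {p : ℝ × E} (hp : p ∈ U) :
    HarmonicAt (fun y => iteratedDeriv k (fun s => G (s, y)) p.1) p.2 := by
  induction k generalizing G with
  | zero => simpa using hharm p hp
  | succ k ih =>
    let G' : ℝ × E → F := fun q => deriv (fun s => G (s, q.2)) q.1
    have hG'eq : Set.EqOn G' (dirDeriv (1, 0) G) U := fun q hq =>
      deriv_slice ((hG.contDiffAt (hU.mem_nhds hq)).differentiableAt (by simp))
    have hharm' : ∀ q ∈ U, HarmonicAt (fun y => G' (q.1, y)) q.2 := by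
      intro q hq
      refine (harmonicAt_congr_nhds ?_).2 (harmonicAt_slice_dirDeriv hU hG hharm (1, 0) hq)
      filter_upwards [(isOpen_slice hU q.1).mem_nhds hq] with y hy using hG'eq hy
    simpa only [iteratedDeriv_succ'] using
      ih ((hG.dirDeriv hU _).congr hG'eq) hharm'

end Laplacian

section NewtonianPotential

variable {E : Type*} [NormedAddCommGroup E] [InnerProductSpace ℝ E]

lemma hasFDerivAt_norm_sub_sq_rpow (c : E) {x : E} (hx : x ≠ c) (e : ℝ) :
    HasFDerivAt (fun y => (‖y - c‖ ^ 2) ^ e)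
      ((2 * e * (‖x - c‖ ^ 2) ^ (e - 1)) • innerSL ℝ (x - c)) x := by
  have h := ((hasFDerivAt_id x).sub_const c).norm_sq.rpow_const (p := e)
    (Or.inl (by simpa [sub_eq_zero] using hx))
  refine h.congr_fderiv ?_
  ext v
  simp
  ring

variable [FiniteDimensional ℝ E]

lemma laplacian_norm_sub_sq_rpow (c : E) {x : E} (hx : x ≠ c) (e : ℝ) :
    Δ (fun y => (‖y - c‖ ^ 2) ^ e) x
      = 2 * e * (2 * e + Module.finrank ℝ E - 2) * (‖x - c‖ ^ 2) ^ (e - 1) := by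
  let b := stdOrthonormalBasis ℝ E
  have hN : 0 < ‖x - c‖ ^ 2 := by positivity [sub_ne_zero.2 hx]
  have hsmooth : ContDiffAt ℝ 2 (fun y => (‖y - c‖ ^ 2) ^ e) x :=
    ((contDiffAt_id.sub contDiffAt_const).norm_sq ℝ).rpow_const_of_ne hN.ne'
  rw [laplacian_eq_sum_dirDeriv b hsmooth]
  have hterm : ∀ i, dirDeriv (b i) (dirDeriv (b i) fun y => (‖y - c‖ ^ 2) ^ e) x
      = 4 * e * (e - 1) * (‖x - c‖ ^ 2) ^ (e - 2) * (⟪x - c, b i⟫ * ⟪b i, x - c⟫)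
        + 2 * e * (‖x - c‖ ^ 2) ^ (e - 1) := by
    intro i
    have hev : dirDeriv (b i) (fun y => (‖y - c‖ ^ 2) ^ e) =ᶠ[𝓝 x]
        fun y => 2 * e * ((‖y - c‖ ^ 2) ^ (e - 1) * ⟪b i, y - c⟫) := by
      filter_upwards [isOpen_ne.mem_nhds hx] with y hy
      simp [dirDeriv, (hasFDerivAt_norm_sub_sq_rpow c hy e).fderiv, real_inner_comm,
        inner_sub_left]
      ring
    have hinner : HasFDerivAt (fun y => ⟪b i, y - c⟫) (innerSL ℝ (b i)) x :=
      ((innerSL ℝ (b i)).hasFDerivAt.comp x ((hasFDerivAt_id x).sub_const c)).congr_fderiv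
        (by ext; simp)
    have h := ((hasFDerivAt_norm_sub_sq_rpow c hx (e - 1)).fun_mul hinner).const_mul (2 * e)
    simp only [dirDeriv] at hev ⊢
    rw [hev.fderiv_eq, h.fderiv]
    rw [show e - 1 - 1 = e - 2 by ring]
    simp [inner_sub_left, inner_sub_right, real_inner_comm x, real_inner_comm c]
    ring
  have hN' : (‖x - c‖ ^ 2) ^ (e - 2) * ‖x - c‖ ^ 2 = (‖x - c‖ ^ 2) ^ (e - 1) := by
    rw [← Real.rpow_add_one hN.ne']; ring_nf
  simp only [hterm, Finset.sum_add_distrib, ← Finset.mul_sum, b.sum_inner_mul_inner,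
    real_inner_self_eq_norm_sq, Finset.sum_const, Finset.card_univ, Fintype.card_fin, nsmul_eq_mul]
  linear_combination 4 * e * (e - 1) * hN'

theorem harmonicAt_norm_sub_sq_rpow (c : E) {x : E} (hx : x ≠ c) {e : ℝ}
    (he : 2 * e + Module.finrank ℝ E = 2) : HarmonicAt (fun y => (‖y - c‖ ^ 2) ^ e) x := by
  refine ⟨((contDiffAt_id.sub contDiffAt_const).norm_sq ℝ).rpow_const_of_ne ?_, ?_⟩
  · positivity [sub_ne_zero.2 hx]
  · filter_upwards [isOpen_ne.mem_nhds hx] with y hy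
    rw [laplacian_norm_sub_sq_rpow c hy e, he]
    simp

end NewtonianPotential

lemma iteratedDeriv_pow_mul_zero {h : ℝ → ℝ} {m : ℕ} (hh : ContDiffAt ℝ m h 0) (j : ℕ) :
    iteratedDeriv m (fun u => u ^ j * h u) 0 = m.descFactorial j * iteratedDeriv (m - j) h 0 := by
  rw [iteratedDeriv_fun_mul (f := fun u => u ^ j) (contDiffAt_id.pow j) hh]
  simp only [iteratedDeriv_fun_pow_zero]
  by_cases hj : j ≤ m
  · rw [Finset.sum_eq_single j]
    · simp [Nat.descFactorial_eq_factorial_mul_choose, mul_comm]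
    · intro i _ hi; simp [hi]
    · intro h; simp at h; omega
  · rw [Nat.descFactorial_eq_zero_iff_lt.mpr (by omega), Nat.cast_zero, zero_mul]
    refine Finset.sum_eq_zero fun i hi => ?_
    simp at hi
    simp [show i ≠ j by omega]

lemma rpow_div_mul_mul_exp_log_div {A P M : ℝ} (hA : 0 < A) (hP : 0 < P) (hM : 0 < M) (n k : ℕ) :
    (A / (P * M)) ^ ((n : ℝ) / 2) * Real.exp (((k : ℝ) + n / 2) * Real.log (M / P))
      = A ^ ((n : ℝ) / 2) * (P ^ 2) ^ (-(n : ℝ) / 2) * (M / P) ^ k := by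
  rw [Real.rpow_def_of_pos (by positivity), Real.rpow_def_of_pos hA,
    Real.rpow_def_of_pos (by positivity),
    ← Real.exp_log (pow_pos (div_pos hM hP) k), ← Real.exp_add, ← Real.exp_add, ← Real.exp_add]
  congr 1
  rw [Real.log_div hA.ne' (by positivity), Real.log_mul hP.ne' hM.ne', Real.log_pow, Real.log_pow,
    Real.log_div hM.ne' hP.ne']
  ring

namespace SD

lemma gegen_add_two (n m : ℕ) (s : ℝ) :
    gegen n (m + 2) s = ((2 * ((m : ℝ) + 2) + n - 2) * s * gegen n (m + 1) s
      - ((m : ℝ) + 2 + n - 2) * gegen n m s) / ((m : ℝ) + 2) := rfl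

def gegenbauerGF (n : ℕ) (s u : ℝ) : ℝ := (1 - 2 * s * u + u ^ 2) ^ (-(n : ℝ) / 2)

lemma hasDerivAt_gegenbauerGF_comp_mul (n : ℕ) (s c : ℝ) {u : ℝ}
    (hu : 0 < 1 - 2 * s * (c * u) + (c * u) ^ 2) :
    HasDerivAt (fun u => gegenbauerGF n s (c * u))
      (-(n : ℝ) / 2 * (1 - 2 * s * (c * u) + (c * u) ^ 2) ^ (-(n : ℝ) / 2 - 1)
        * (2 * c ^ 2 * u - 2 * s * c)) u := by
  have hQ := ((((hasDerivAt_id' u).const_mul c).const_mul (2 * s)).const_sub 1).fun_add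
    (((hasDerivAt_id' u).const_mul c).fun_pow 2)
  exact (hQ.rpow_const (Or.inl hu.ne')).congr_deriv (by norm_num; ring)

/-- Differentiating `Q g' = n c (s - c u) g`, where `g u = gegenbauerGF n s (c u)` and
`Q u = 1 - 2 s c u + c² u²`, `m + 1` times at `0` gives a three-term recursion. -/
lemma iteratedDeriv_gegenbauerGF_add_two (n : ℕ) (s c : ℝ) (m : ℕ) :
    iteratedDeriv (m + 2) (fun u => gegenbauerGF n s (c * u)) 0
      = (2 * ((m : ℝ) + 1) + n) * s * c
          * iteratedDeriv (m + 1) (fun u => gegenbauerGF n s (c * u)) 0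
        - ((m : ℝ) + 1) * ((m : ℝ) + n) * c ^ 2
          * iteratedDeriv m (fun u => gegenbauerGF n s (c * u)) 0 := by
  set g := fun u => gegenbauerGF n s (c * u)
  set Q : ℝ → ℝ := fun u => 1 - 2 * s * (c * u) + (c * u) ^ 2 with hQ_def
  have hQc : ContDiff ℝ ∞ Q := by fun_prop
  set O := {u | 0 < Q u}
  have hO : IsOpen O := isOpen_lt continuous_const hQc.continuous
  have h0 : (0 : ℝ) ∈ O := by simp [O, hQ_def]
  have hg : ContDiffAt ℝ ∞ g 0 := hQc.contDiffAt.rpow_const_of_ne (ne_of_gt h0)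
  have hode : ∀ u ∈ O,
      Q u * deriv g u = n * c * s * g u + (-(n * c ^ 2)) * (u ^ 1 * g u) := by
    intro u hu
    have hQe : Q u ^ (-(n : ℝ) / 2) = Q u ^ (-(n : ℝ) / 2 - 1) * Q u := by
      rw [← Real.rpow_add_one (ne_of_gt hu)]; ring_nf
    rw [(hasDerivAt_gegenbauerGF_comp_mul n s c hu).deriv, show g u = Q u ^ (-(n : ℝ) / 2) from rfl,
      hQe]
    simp only [hQ_def]
    ring
  have hgm : ContDiffAt ℝ (m + 1 : ℕ) g 0 := hg.of_le (by exact_mod_cast le_top)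
  have hhm : ContDiffAt ℝ (m + 1 : ℕ) (deriv g) 0 :=
    (hg.derivWithin (m := ∞) le_rfl).of_le (by exact_mod_cast le_top)
  have key := Filter.EventuallyEq.iteratedDeriv_eq (m + 1)
    (show (fun u => Q u * deriv g u) =ᶠ[𝓝 0] _ from eventually_of_mem (hO.mem_nhds h0) hode)
  have hL : (fun u => Q u * deriv g u) = fun u =>
      deriv g u + ((-(2 * s * c)) * (u ^ 1 * deriv g u) + c ^ 2 * (u ^ 2 * deriv g u)) := by
    funext u; simp only [hQ_def]; ring
  rw [hL, iteratedDeriv_fun_add hhm (by fun_prop),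
    iteratedDeriv_fun_add (by fun_prop) (by fun_prop),
    iteratedDeriv_const_mul_field, iteratedDeriv_const_mul_field, iteratedDeriv_pow_mul_zero hhm,
    iteratedDeriv_pow_mul_zero hhm, iteratedDeriv_fun_add (by fun_prop) (by fun_prop),
    iteratedDeriv_const_mul_field, iteratedDeriv_const_mul_field,
    iteratedDeriv_pow_mul_zero hgm] at key
  simp only [← iteratedDeriv_succ'] at key
  rcases m with _ | m
  · simp at key ⊢
    linear_combination key
  · simp [Nat.descFactorial] at key ⊢
    linear_combination key

theorem iteratedDeriv_gegenbauerGF_comp_mul (n k : ℕ) (s c : ℝ) :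
    iteratedDeriv k (fun u => gegenbauerGF n s (c * u)) 0 = k ! * c ^ k * gegen n k s := by
  suffices h : ∀ m, iteratedDeriv m (fun u => gegenbauerGF n s (c * u)) 0
      = m ! * c ^ m * gegen n m s ∧ iteratedDeriv (m + 1) (fun u => gegenbauerGF n s (c * u)) 0
      = (m + 1)! * c ^ (m + 1) * gegen n (m + 1) s from (h k).1
  intro m
  induction m with
  | zero =>
    have h1 := (hasDerivAt_gegenbauerGF_comp_mul n s c (u := 0) (by simp)).deriv
    simp only [zero_add, iteratedDeriv_one, iteratedDeriv_zero, h1]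
    simp [gegenbauerGF, gegen, gegenAux]
    ring
  | succ m ih =>
    refine ⟨ih.2, ?_⟩
    rw [iteratedDeriv_gegenbauerGF_add_two, ih.1, ih.2, gegen_add_two]
    push_cast [Nat.factorial_succ]
    field_simp
    ring

variable {n : ℕ}

lemma norm_e1 : ‖e1 n‖ = 1 := by simp [e1]

lemma rP_sq (α : ℝ) (x : Pt n) : rP n α x ^ 2 = ‖x‖ ^ 2 - 2 * α * ⟪x, e1 n⟫ + α ^ 2 := by
  rw [rP, norm_sub_sq_real, inner_smul_right, norm_smul, norm_e1]; simp; ring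

lemma rM_sq (α : ℝ) (x : Pt n) : rM n α x ^ 2 = ‖x‖ ^ 2 + 2 * α * ⟪x, e1 n⟫ + α ^ 2 := by
  rw [rM, norm_add_sq_real, inner_smul_right, norm_smul, norm_e1]; simp; ring

/-- The spheres `{r₋ = e^ξ r₊}` of Apollonius are the spheres `∂B`. -/
lemma rM_sq_sub_exp_mul_rP_sq (α : ℝ) {ξ : ℝ} (hξ : ξ ≠ 0) (x : Pt n) :
    rM n α x ^ 2 - (Real.exp ξ * rP n α x) ^ 2
      = (1 - Real.exp ξ ^ 2) * (dist x (ctr n α ξ) ^ 2 - rad α ξ ^ 2) := by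
  have hE : Real.exp ξ ^ 2 - 1 ≠ 0 := by
    rw [sub_ne_zero, ← Real.exp_nat_mul]; simpa using hξ
  have hE0 : Real.exp ξ ≠ 0 := (Real.exp_pos ξ).ne'
  rw [mul_pow, rM_sq, rP_sq, dist_eq_norm, ctr, rad, norm_sub_sq_real, inner_smul_right,
    norm_smul, norm_e1, Real.cosh_eq, Real.sinh_eq, Real.exp_neg]
  generalize Real.exp ξ = E at hE hE0 ⊢
  simp only [Real.norm_eq_abs, mul_one, sq_abs]
  field_simp
  ring

lemma mem_ballB_iff {α ξ : ℝ} (hα : 0 < α) (hξ : 0 < ξ) {x : Pt n} :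
    x ∈ ballB n α ξ ↔ Real.exp ξ * rP n α x < rM n α x := by
  have hrad : 0 < rad α ξ := div_pos hα (Real.sinh_pos_iff.2 hξ)
  have hexp : 1 < Real.exp ξ ^ 2 := one_lt_pow₀ (Real.one_lt_exp_iff.2 hξ) two_ne_zero
  have hP : 0 ≤ Real.exp ξ * rP n α x := mul_nonneg (Real.exp_pos ξ).le (norm_nonneg _)
  have hM : 0 ≤ rM n α x := norm_nonneg _
  have := rM_sq_sub_exp_mul_rP_sq α hξ.ne' x
  rw [ballB, Metric.mem_ball, ← pow_lt_pow_iff_left₀ dist_nonneg hrad.le two_ne_zero,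
    ← pow_lt_pow_iff_left₀ hP hM two_ne_zero]
  constructor <;> intro h <;> nlinarith

lemma xiC_eq_of_mem_frontier {α ξ : ℝ} (hα : 0 < α) (hξ : 0 < ξ) {x : Pt n}
    (hx : x ∈ frontier (ballB n α ξ)) : xiC n α x = ξ := by
  have hrad : rad α ξ ≠ 0 := (div_pos hα (Real.sinh_pos_iff.2 hξ)).ne'
  rw [ballB, frontier_ball _ hrad, mem_sphere] at hx
  have hM : rM n α x = Real.exp ξ * rP n α x := by
    have := rM_sq_sub_exp_mul_rP_sq α hξ.ne' x
    rw [hx, sub_self, mul_zero, sub_eq_zero] at this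
    exact (pow_left_inj₀ (norm_nonneg _) (mul_nonneg (Real.exp_pos ξ).le (norm_nonneg _))
      two_ne_zero).1 this
  -- `r₊ = r₋ = 0` is impossible since `r₊² + r₋² = 2‖x‖² + 2α²`.
  have hP : rP n α x ≠ 0 := by
    intro h0
    have hsum := congrArg₂ (· + ·) (rM_sq α x) (rP_sq α x)
    simp only [hM, h0, mul_zero] at hsum
    nlinarith [sq_nonneg ‖x‖]
  rw [xiC, hM, mul_div_cancel_right₀ _ hP, Real.log_exp]

lemma rP_neg (α : ℝ) (x : Pt n) : rP n (-α) x = rM n α x := by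
  simp [rP, rM]

lemma rM_neg (α : ℝ) (x : Pt n) : rM n (-α) x = rP n α x := by
  simp [rP, rM, sub_eq_add_neg]

lemma cosT_neg (α : ℝ) (x : Pt n) : cosT n (-α) x = cosT n α x := by
  simp only [cosT, rP_neg, rM_neg]; ring

lemma cosh_xiC_sub_cosT (α : ℝ) {x : Pt n} (hP : 0 < rP n α x) (hM : 0 < rM n α x) :
    Real.cosh (xiC n α x) - cosT n α x = 2 * α ^ 2 / (rP n α x * rM n α x) := by
  rw [xiC, cosT, Real.cosh_eq, Real.exp_neg, Real.exp_log (div_pos hM hP), inv_div]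
  field_simp
  ring

/-- For `t ≠ 1` this is `|1 - t|⁻ⁿ` times the Newtonian potential `‖x - c‖⁻ⁿ` of `ℝⁿ⁺²` with
pole `c = α (1 + t) / (1 - t) e₁`, a pole that starts at `α e₁` for `t = 0`. -/
def potentialFamily (n : ℕ) (α : ℝ) (p : ℝ × Pt n) : ℝ :=
  (‖(1 - p.1) • p.2 - (α * (1 + p.1)) • e1 n‖ ^ 2) ^ (-(n : ℝ) / 2)

def potentialCoeff (n : ℕ) (α : ℝ) (k : ℕ) (x : Pt n) : ℝ :=
  iteratedDeriv k (fun t => potentialFamily n α (t, x)) 0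

lemma harmonicAt_potentialFamily_slice (α : ℝ) {p : ℝ × Pt n} (hp1 : p.1 ≠ 1)
    (hp : (1 - p.1) • p.2 - (α * (1 + p.1)) • e1 n ≠ 0) :
    HarmonicAt (fun y => potentialFamily n α (p.1, y)) p.2 := by
  have ht : 1 - p.1 ≠ 0 := sub_ne_zero.2 hp1.symm
  set c : Pt n := (α * (1 + p.1) / (1 - p.1)) • e1 n
  have hfac : ∀ y : Pt n, (1 - p.1) • y - (α * (1 + p.1)) • e1 n = (1 - p.1) • (y - c) := by
    intro y; rw [smul_sub, smul_smul, mul_div_cancel₀ _ ht]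
  have hslice : (fun y => potentialFamily n α (p.1, y))
      = ((1 - p.1) ^ 2) ^ (-(n : ℝ) / 2) • fun y => (‖y - c‖ ^ 2) ^ (-(n : ℝ) / 2) := by
    funext y
    simp only [potentialFamily, hfac, norm_smul, mul_pow, Real.norm_eq_abs, sq_abs, Pi.smul_apply,
      smul_eq_mul]
    exact Real.mul_rpow (sq_nonneg _) (sq_nonneg _)
  have hpc : p.2 ≠ c := fun h => hp (by rw [hfac, h, sub_self, smul_zero])
  rw [hslice]
  exact (harmonicAt_norm_sub_sq_rpow c hpc (by simp; ring)).const_smul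

lemma harmonicAt_potentialCoeff (α : ℝ) (k : ℕ) {x : Pt n} (hx : x ≠ α • e1 n) :
    HarmonicAt (potentialCoeff n α k) x := by
  set U := {p : ℝ × Pt n | p.1 ≠ 1 ∧ (1 - p.1) • p.2 - (α * (1 + p.1)) • e1 n ≠ 0}
  have hU : IsOpen U := (isOpen_ne_fun (by fun_prop) (by fun_prop)).inter
    (isOpen_ne_fun (by fun_prop) (by fun_prop))
  have hq : ContDiff ℝ ∞ fun p : ℝ × Pt n => ‖(1 - p.1) • p.2 - (α * (1 + p.1)) • e1 n‖ ^ 2 :=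
    (((contDiff_const.sub contDiff_fst).smul contDiff_snd).sub
      ((contDiff_const.mul (contDiff_const.add contDiff_fst)).smul contDiff_const)).norm_sq ℝ
  have hG : ContDiffOn ℝ ∞ (potentialFamily n α) U := fun p hp =>
    (hq.contDiffAt.rpow_const_of_ne (by simpa using hp.2)).contDiffWithinAt
  exact harmonicAt_iteratedDeriv_slice hU hG
    (fun p hp => harmonicAt_potentialFamily_slice α hp.1 hp.2) k (p := (0, x))
    ⟨zero_ne_one, by simpa [sub_eq_zero] using hx⟩

lemma norm_sq_sub_smul_e1 (α t : ℝ) (x : Pt n) :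
    ‖(1 - t) • x - (α * (1 + t)) • e1 n‖ ^ 2
      = rP n α x ^ 2 - t * (rP n α x ^ 2 + rM n α x ^ 2 - 4 * α ^ 2) + t ^ 2 * rM n α x ^ 2 := by
  rw [norm_sub_sq_real, norm_smul, norm_smul, Real.norm_eq_abs, Real.norm_eq_abs, mul_pow, mul_pow,
    sq_abs, sq_abs, inner_smul_left, inner_smul_right, norm_e1, rP_sq, rM_sq, conj_trivial]
  ring

lemma potentialCoeff_eq (α : ℝ) (k : ℕ) {x : Pt n} (hP : 0 < rP n α x) (hM : 0 < rM n α x) :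
    potentialCoeff n α k x = k ! * (rP n α x ^ 2) ^ (-(n : ℝ) / 2) * (rM n α x / rP n α x) ^ k
      * gegen n k (cosT n α x) := by
  set P := rP n α x
  set M := rM n α x
  set s := cosT n α x
  have hs : s = (P ^ 2 + M ^ 2 - 4 * α ^ 2) / (2 * P * M) := rfl
  have hfac : ∀ t : ℝ, ‖(1 - t) • x - (α * (1 + t)) • e1 n‖ ^ 2
      = P ^ 2 * (1 - 2 * s * (M / P * t) + (M / P * t) ^ 2) := by
    intro t
    rw [norm_sq_sub_smul_e1, hs]
    field_simp
    ring
  have hslice : (fun t => potentialFamily n α (t, x))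
      = fun t => (P ^ 2) ^ (-(n : ℝ) / 2) * gegenbauerGF n s (M / P * t) := by
    funext t
    have hQ : 0 ≤ 1 - 2 * s * (M / P * t) + (M / P * t) ^ 2 :=
      (mul_nonneg_iff_of_pos_left (by positivity)).1 ((hfac t).symm ▸ sq_nonneg _)
    rw [potentialFamily, hfac t, Real.mul_rpow (sq_nonneg _) hQ, gegenbauerGF]
  rw [potentialCoeff, hslice, iteratedDeriv_const_mul_field, iteratedDeriv_gegenbauerGF_comp_mul]
  ring

lemma uBase_eq (ξ₁ : ℝ) {α : ℝ} (hα : α ≠ 0) (k : ℕ) {x : Pt n} (hP : 0 < rP n α x)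
    (hM : 0 < rM n α x) :
    uBase n ξ₁ α k x = (2 * α ^ 2) ^ ((n : ℝ) / 2) / k !
      * (Real.exp (2 * ((k : ℝ) + n / 2) * ξ₁) * potentialCoeff n (-α) k x
        - potentialCoeff n α k x) := by
  rw [potentialCoeff_eq (-α) k (by rwa [rP_neg]) (by rwa [rM_neg]), potentialCoeff_eq α k hP hM,
    rP_neg, rM_neg, cosT_neg, uBase, cosh_xiC_sub_cosT α hP hM, xiC]
  have hA : 0 < 2 * α ^ 2 := by positivity
  have h1 := rpow_div_mul_mul_exp_log_div hA hP hM n k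
  have h2 := rpow_div_mul_mul_exp_log_div hA hM hP n k
  have hlog : Real.log (rP n α x / rM n α x) = -Real.log (rM n α x / rP n α x) := by
    rw [← Real.log_inv, inv_div]
  rw [mul_comm (rM n α x), hlog] at h2
  have hexp : Real.exp (((k : ℝ) + n / 2) * (2 * ξ₁ - Real.log (rM n α x / rP n α x)))
      = Real.exp (2 * ((k : ℝ) + n / 2) * ξ₁)
        * Real.exp (((k : ℝ) + n / 2) * -Real.log (rM n α x / rP n α x)) := by
    rw [← Real.exp_add]; ring_nf
  rw [hexp]
  generalize Real.exp (2 * ((k : ℝ) + n / 2) * ξ₁) = E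
  generalize Real.exp (((k : ℝ) + n / 2) * -Real.log (rM n α x / rP n α x)) = E₁ at h2 ⊢
  generalize Real.exp (((k : ℝ) + n / 2) * Real.log (rM n α x / rP n α x)) = E₂ at h1 ⊢
  have hk : (k ! : ℝ) ≠ 0 := by positivity
  field_simp
  simp only [neg_div] at h1 h2 ⊢
  linear_combination (E * gegen n k (cosT n α x)) * h2 - gegen n k (cosT n α x) * h1

lemma harmonicAt_uBase (ξ₁ : ℝ) {α : ℝ} (hα : α ≠ 0) (k : ℕ) {x : Pt n} (hP : 0 < rP n α x)
    (hM : 0 < rM n α x) : HarmonicAt (uBase n ξ₁ α k) x := by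
  have hcP : Continuous (rP n α) := (continuous_id.sub continuous_const).norm
  have hcM : Continuous (rM n α) := (continuous_id.add continuous_const).norm
  have hW : IsOpen {y : Pt n | 0 < rP n α y ∧ 0 < rM n α y} :=
    (isOpen_lt continuous_const hcP).inter (isOpen_lt continuous_const hcM)
  have hev : uBase n ξ₁ α k =ᶠ[𝓝 x] fun y => (2 * α ^ 2) ^ ((n : ℝ) / 2) / k ! *
      (Real.exp (2 * ((k : ℝ) + n / 2) * ξ₁) * potentialCoeff n (-α) k y
        - potentialCoeff n α k y) :=
    eventually_of_mem (hW.mem_nhds ⟨hP, hM⟩) fun y hy => uBase_eq ξ₁ hα k hy.1 hy.2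
  have hP' : x ≠ α • e1 n := fun h => hP.ne' (by simp [rP, h])
  have hM' : x ≠ -α • e1 n := fun h => hM.ne' (by simp [rM, h])
  exact (harmonicAt_congr_nhds hev).2
    (((harmonicAt_potentialCoeff (-α) k hM').const_smul.sub
      (harmonicAt_potentialCoeff α k hP')).const_smul)

lemma rP_pos_and_rM_pos_of_mem_shell {ξ₁ ξ₂ α : ℝ} (hξ : ξ₂ < ξ₁) (hξ₂ : 0 < ξ₂) (hα : 0 < α)
    {x : Pt n} (hx : x ∈ shell n ξ₁ ξ₂ α) : 0 < rP n α x ∧ 0 < rM n α x := by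
  have hM : 0 < rM n α x :=
    (mul_nonneg (Real.exp_pos _).le (norm_nonneg _)).trans_lt ((mem_ballB_iff hα hξ₂).1 hx.1)
  refine ⟨(norm_nonneg _).lt_of_ne fun h0 => hx.2 (subset_closure ?_), hM⟩
  rwa [mem_ballB_iff hα (hξ₂.trans hξ), rP, ← h0, mul_zero]

lemma uBase_eq_zero_of_mem_gammaD {ξ₁ α : ℝ} (hξ₁ : 0 < ξ₁) (hα : 0 < α) (k : ℕ) {x : Pt n}
    (hx : x ∈ gammaD n α ξ₁) : uBase n ξ₁ α k x = 0 := by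
  rw [uBase, xiC_eq_of_mem_frontier hα hξ₁ hx, two_mul, add_sub_cancel_right, sub_self]
  simp

lemma lap_eq_laplacian {f : Pt n → ℝ} {x : Pt n} (hf : ContDiffAt ℝ 2 f x) : lap n f x = Δ f x := by
  rw [laplacian_eq_sum_dirDeriv (EuclideanSpace.basisFun (Fin (n + 2)) ℝ) hf]
  simp only [EuclideanSpace.basisFun_apply]
  rfl

end SD

open SD in
theorem uBase_harmonic_and_dirichlet_general
    (n : ℕ) (ξ₁ ξ₂ α : ℝ) (hξ : ξ₂ < ξ₁) (hξ₂ : 0 < ξ₂) (hα : 0 < α) :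
    ∀ k : ℕ,
      ContDiffOn ℝ 2 (uBase n ξ₁ α k) (shell n ξ₁ ξ₂ α) ∧
      (∀ x ∈ shell n ξ₁ ξ₂ α, lap n (uBase n ξ₁ α k) x = 0) ∧
      (∀ x ∈ gammaD n α ξ₁, uBase n ξ₁ α k x = 0) := by
  intro k
  have hharm : HarmonicOnNhd (uBase n ξ₁ α k) (shell n ξ₁ ξ₂ α) := fun x hx =>
    have hx' := rP_pos_and_rM_pos_of_mem_shell hξ hξ₂ hα hx
    harmonicAt_uBase ξ₁ hα.ne' k hx'.1 hx'.2
  refine ⟨hharm.contDiffOn, fun x hx => ?_,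
    fun x hx => uBase_eq_zero_of_mem_gammaD (hξ₂.trans hξ) hα k hx⟩
  rw [lap_eq_laplacian (hharm x hx).1]
  exact (hharm x hx).2.eq_of_nhds

open SD in
/-- The basis functions `u_k` are harmonic in `Ω` and vanish identically on `Γ_D`. -/
theorem uBase_harmonic_and_dirichlet
    (n : ℕ) (hn : 1 ≤ n) (ξ₁ ξ₂ α : ℝ) (hξ : ξ₂ < ξ₁) (hξ₂ : 0 < ξ₂) (hα : 0 < α) :
    ∀ k : ℕ,
      ContDiffOn ℝ 2 (uBase n ξ₁ α k) (shell n ξ₁ ξ₂ α) ∧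
      (∀ x ∈ shell n ξ₁ ξ₂ α, lap n (uBase n ξ₁ α k) x = 0) ∧
      (∀ x ∈ gammaD n α ξ₁, uBase n ξ₁ α k x = 0) :=
  uBase_harmonic_and_dirichlet_general n ξ₁ ξ₂ α hξ hξ₂ hα
end
end
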